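/- For every i ≥ 1, ∫_{ℝ^d} |T_μ(x) − T_{ν_i}(x)|² dρ(x) = σ_i (2 r_i² + 4 w_i²); in particular this quantity is at least 4 σ_i w_i². -/

import Mathlib

open MeasureTheory Metric
open scoped ENNReal

namespace Stmt15Aux

variable {d : ℕ}

lemma coord_dist_le (x y : EuclideanSpace ℝ (Fin d)) (j : Fin d) :
    |x j - y j| ≤ dist x y := by
  rw [EuclideanSpace.dist_eq]
  have h1 : |x j - y j| = Real.sqrt (dist (x j) (y j) ^ 2) := by
    rw [Real.sqrt_sq dist_nonneg, Real.dist_eq]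
  rw [h1]
  apply Real.sqrt_le_sqrt
  exact Finset.single_le_sum (f := fun k => dist (x k) (y k) ^ 2)
    (fun k _ => sq_nonneg _) (Finset.mem_univ j)

lemma dist_sq_eq (x y : EuclideanSpace ℝ (Fin d)) (p q : Fin d) (hpq : p ≠ q)
    (a b : ℝ) (hp : x p - y p = a) (hq : x q - y q = b)
    (h0 : ∀ j, j ≠ p → j ≠ q → x j = y j) :
    dist x y ^ 2 = a ^ 2 + b ^ 2 := by
  rw [EuclideanSpace.dist_eq, Real.sq_sqrt (Finset.sum_nonneg fun k _ => sq_nonneg _)]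
  have : ∀ j : Fin d, dist (x j) (y j) ^ 2 =
      (if j = p then a ^ 2 else 0) + (if j = q then b ^ 2 else 0) := by
    intro j
    by_cases hjp : j = p
    · subst hjp
      simp [if_neg hpq, Real.dist_eq, ← hp, sq_abs]
    · by_cases hjq : j = q
      · subst hjq
        simp [hjp, Real.dist_eq, ← hq, sq_abs]
      · simp [hjp, hjq, Real.dist_eq, h0 j hjp hjq]
  rw [Finset.sum_congr rfl (fun j _ => this j), Finset.sum_add_distrib,
    Finset.sum_ite_eq' Finset.univ p (fun _ => a ^ 2),
    Finset.sum_ite_eq' Finset.univ q (fun _ => b ^ 2)]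
  simp

lemma prod_ite2 (p q : Fin d) (hpq : p ≠ q) (A B : ℝ≥0∞) :
    (∏ j : Fin d, if j = p then A else if j = q then B else 1) = A * B := by
  have : ∀ j : Fin d, (if j = p then A else if j = q then B else 1) =
      (if j = p then A else 1) * (if j = q then B else 1) := by
    intro j
    by_cases hjp : j = p
    · subst hjp; simp [if_neg hpq]
    · by_cases hjq : j = q <;> simp [hjp, hjq, Ne.symm hpq]
  rw [Finset.prod_congr rfl (fun j _ => this j), Finset.prod_mul_distrib,
    Finset.prod_ite_eq' Finset.univ p (fun _ => A),
    Finset.prod_ite_eq' Finset.univ q (fun _ => B)]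
  simp

lemma measurable_coordSet (s : Fin d → Set ℝ) (hs : ∀ j, MeasurableSet (s j)) :
    MeasurableSet {x : EuclideanSpace ℝ (Fin d) | ∀ j, x j ∈ s j} := by
  have : {x : EuclideanSpace ℝ (Fin d) | ∀ j, x j ∈ s j} =
      ⋂ j, (fun x : EuclideanSpace ℝ (Fin d) => x j) ⁻¹' (s j) := by
    ext x; simp [Set.mem_iInter]
  rw [this]
  exact MeasurableSet.iInter fun j => ((measurable_pi_apply j).comp (WithLp.measurable_ofLp 2 (Fin d → ℝ))) (hs j)

lemma vol_coordSet (s : Fin d → Set ℝ) (hs : ∀ j, MeasurableSet (s j)) :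
    volume {x : EuclideanSpace ℝ (Fin d) | ∀ j, x j ∈ s j} = ∏ j, volume (s j) := by
  have he : {x : EuclideanSpace ℝ (Fin d) | ∀ j, x j ∈ s j} =
      (MeasurableEquiv.toLp 2 (Fin d → ℝ)).symm ⁻¹' (Set.univ.pi s) := by
    ext x; simp [Set.mem_pi]
  rw [he, (EuclideanSpace.volume_preserving_symm_measurableEquiv_toLp (Fin d)).measure_preimage
    (MeasurableSet.univ_pi hs).nullMeasurableSet]
  exact volume_pi_pi s

lemma vol_hyperplane (j : Fin d) (c : ℝ) :
    volume {x : EuclideanSpace ℝ (Fin d) | x j = c} = 0 := by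
  have he : {x : EuclideanSpace ℝ (Fin d) | x j = c} =
      (MeasurableEquiv.toLp 2 (Fin d → ℝ)).symm ⁻¹' {f : Fin d → ℝ | f j = c} := by
    ext x; rfl
  have hm : MeasurableSet {f : Fin d → ℝ | f j = c} := by
    have : {f : Fin d → ℝ | f j = c} = (fun f : Fin d → ℝ => f j) ⁻¹' {c} := rfl
    rw [this]
    exact (measurable_pi_apply j) (measurableSet_singleton c)
  rw [he, (EuclideanSpace.volume_preserving_symm_measurableEquiv_toLp (Fin d)).measure_preimage
    hm.nullMeasurableSet, MeasureTheory.volume_pi]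
  exact Measure.pi_hyperplane (fun _ : Fin d => (volume : Measure ℝ)) j c

lemma box_closure_diff_null (a b : Fin d → ℝ) :
    volume (closure {x : EuclideanSpace ℝ (Fin d) | ∀ j, x j ∈ Set.Ioo (a j) (b j)} \
      {x : EuclideanSpace ℝ (Fin d) | ∀ j, x j ∈ Set.Ioo (a j) (b j)}) = 0 := by
  set B := {x : EuclideanSpace ℝ (Fin d) | ∀ j, x j ∈ Set.Ioo (a j) (b j)}
  have hclosed : IsClosed {x : EuclideanSpace ℝ (Fin d) | ∀ j, x j ∈ Set.Icc (a j) (b j)} := by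
    have : {x : EuclideanSpace ℝ (Fin d) | ∀ j, x j ∈ Set.Icc (a j) (b j)} =
        ⋂ j, (fun x : EuclideanSpace ℝ (Fin d) => x j) ⁻¹' (Set.Icc (a j) (b j)) := by
      ext x; simp [Set.mem_iInter]
    rw [this]
    exact isClosed_iInter fun j => IsClosed.preimage ((continuous_apply j).comp (PiLp.continuous_ofLp 2 _)) isClosed_Icc
  have hsub : closure B \ B ⊆
      ⋃ j : Fin d, ({x : EuclideanSpace ℝ (Fin d) | x j = a j} ∪ {x | x j = b j}) := by
    rintro x ⟨hx1, hx2⟩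
    have hBsub : B ⊆ {x : EuclideanSpace ℝ (Fin d) | ∀ j, x j ∈ Set.Icc (a j) (b j)} :=
      fun y hy j => Set.Ioo_subset_Icc_self (hy j)
    have hIcc : ∀ j, x j ∈ Set.Icc (a j) (b j) := closure_minimal hBsub hclosed hx1
    have hx2' : ¬ ∀ j, x j ∈ Set.Ioo (a j) (b j) := hx2
    push_neg at hx2'
    obtain ⟨j, hj⟩ := hx2'
    refine Set.mem_iUnion.2 ⟨j, ?_⟩
    rcases hIcc j with ⟨h1, h2⟩
    rw [Set.mem_Ioo] at hj
    push_neg at hj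
    rcases lt_or_eq_of_le h1 with h1' | h1'
    · right; exact le_antisymm h2 (hj h1')
    · left; exact h1'.symm
  refine measure_mono_null hsub (measure_iUnion_null fun j => measure_union_null ?_ ?_)
  · exact vol_hyperplane j (a j)
  · exact vol_hyperplane j (b j)

lemma quarter_pos (i1 : Fin d) (L H : Fin d → ℝ) (hL : L i1 < 0)
    (x : EuclideanSpace ℝ (Fin d)) :
    ((∀ j, x j ∈ Set.Ioo (L j) (H j)) ∧ 0 ≤ x i1) ↔
    ∀ j, x j ∈ (if j = i1 then Set.Ico 0 (H i1) else Set.Ioo (L j) (H j)) := by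
  constructor
  · rintro ⟨h1, h2⟩ j
    by_cases hj : j = i1
    · subst hj; rw [if_pos rfl]; exact ⟨h2, (h1 j).2⟩
    · rw [if_neg hj]; exact h1 j
  · intro h
    have hi := h i1
    rw [if_pos rfl] at hi
    refine ⟨fun j => ?_, hi.1⟩
    by_cases hj : j = i1
    · subst hj; exact ⟨lt_of_lt_of_le hL hi.1, hi.2⟩
    · have := h j; rwa [if_neg hj] at this

lemma quarter_neg (i1 : Fin d) (L H : Fin d → ℝ) (hH : 0 < H i1)
    (x : EuclideanSpace ℝ (Fin d)) :
    ((∀ j, x j ∈ Set.Ioo (L j) (H j)) ∧ x i1 < 0) ↔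
    ∀ j, x j ∈ (if j = i1 then Set.Ioo (L i1) 0 else Set.Ioo (L j) (H j)) := by
  constructor
  · rintro ⟨h1, h2⟩ j
    by_cases hj : j = i1
    · subst hj; rw [if_pos rfl]; exact ⟨(h1 j).1, h2⟩
    · rw [if_neg hj]; exact h1 j
  · intro h
    have hi := h i1
    rw [if_pos rfl] at hi
    refine ⟨fun j => ?_, hi.2⟩
    by_cases hj : j = i1
    · subst hj; exact ⟨hi.1, lt_trans hi.2 hH⟩
    · have := h j; rwa [if_neg hj] at this

end Stmt15Aux
open Stmt15Aux in
set_option maxHeartbeats 1000000 in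
/-- For every `i`, `∫ |T_μ - T_{ν_i}|² dρ = σ_i (2 r_i² + 4 w_i²)`; in particular this
quantity is at least `4 σ_i w_i²`. -/
theorem stmt15 (d : ℕ) (hd : 2 ≤ d)
    (ℓ r w u : ℕ → ℝ)
    (hℓ : ∀ i, 0 < ℓ i) (hr : ∀ i, 0 < r i) (hw : ∀ i, 0 < w i)
    (hsep : ∀ i, 100 * max (ℓ i) (max (r i) (w i)) ≤ u (i + 1) - u i)
    (hsep' : ∀ i, 100 * max (ℓ (i + 1)) (max (r (i + 1)) (w (i + 1))) ≤ u (i + 1) - u i)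
    (hwr : ∀ i, 100 * r i ≤ w i)
    (Q : ℝ → ℝ → Set (EuclideanSpace ℝ (Fin d)))
    (hQ : ∀ L R : ℝ, Q L R = {x : EuclideanSpace ℝ (Fin d) |
      0 < x ⟨0, by omega⟩ ∧ x ⟨0, by omega⟩ < L ∧ |x ⟨1, by omega⟩| < R / 2 ∧
      ∀ j : Fin d, 2 ≤ (j : ℕ) → |x j| < 1 / 2})
    (Ap Am Bp Bm Cp Cm : ℕ → EuclideanSpace ℝ (Fin d))
    (hAp : ∀ i, Ap i = EuclideanSpace.single (⟨0, by omega⟩ : Fin d) (u i + w i))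
    (hAm : ∀ i, Am i = EuclideanSpace.single (⟨0, by omega⟩ : Fin d) (u i - w i))
    (hBp : ∀ i, Bp i = EuclideanSpace.single (⟨0, by omega⟩ : Fin d) (u i) +
      EuclideanSpace.single (⟨1, by omega⟩ : Fin d) (w i))
    (hBm : ∀ i, Bm i = EuclideanSpace.single (⟨0, by omega⟩ : Fin d) (u i) -
      EuclideanSpace.single (⟨1, by omega⟩ : Fin d) (w i))
    (hCp : ∀ i, Cp i = EuclideanSpace.single (⟨0, by omega⟩ : Fin d) (u i + r i) +
      EuclideanSpace.single (⟨1, by omega⟩ : Fin d) (w i))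
    (hCm : ∀ i, Cm i = EuclideanSpace.single (⟨0, by omega⟩ : Fin d) (u i - r i) -
      EuclideanSpace.single (⟨1, by omega⟩ : Fin d) (w i))
    (S : ℕ → Set (EuclideanSpace ℝ (Fin d)))
    (hS : ∀ i, S i =
      (fun q => Ap i + q) '' Q (ℓ i) (r i) ∪ (fun q => Am i - q) '' Q (ℓ i) (r i))
    (X : Set (EuclideanSpace ℝ (Fin d))) (hX : X = ⋃ i, S i)
    (ρ : Measure (EuclideanSpace ℝ (Fin d))) (hprob : IsProbabilityMeasure ρ)
    (g : EuclideanSpace ℝ (Fin d) → ℝ≥0∞) (hgmeas : Measurable g)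
    (hρ : ρ = volume.withDensity g)
    (hgsupp : ∀ x ∉ closure X, g x = 0)
    (hgconst : ∀ i, ∃ c : ℝ≥0∞, ∀ x ∈ S i, g x = c)
    (σ : ℕ → ℝ≥0∞) (hσ : ∀ i, σ i = ρ ((fun q => Ap i + q) '' Q (ℓ i) (r i)))
    (T : EuclideanSpace ℝ (Fin d) → EuclideanSpace ℝ (Fin d))
    (hT : ∀ j, ∀ x ∈ S j, T x = if 0 ≤ x ⟨1, by omega⟩ then Bp j else Bm j)
    (Tν : ℕ → EuclideanSpace ℝ (Fin d) → EuclideanSpace ℝ (Fin d))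
    (hTν₁ : ∀ i, ∀ x ∈ X \ S i, Tν i x = T x)
    (hTν₂ : ∀ i, ∀ x ∈ (fun q => Ap i + q) '' Q (ℓ i) (r i), Tν i x = Cp i)
    (hTν₃ : ∀ i, ∀ x ∈ (fun q => Am i - q) '' Q (ℓ i) (r i), Tν i x = Cm i)
    (i : ℕ) :
    ∫⁻ x, ENNReal.ofReal (dist (T x) (Tν i x) ^ 2) ∂ρ =
      σ i * ENNReal.ofReal (2 * r i ^ 2 + 4 * w i ^ 2) ∧
    σ i * ENNReal.ofReal (4 * w i ^ 2) ≤
      ∫⁻ x, ENNReal.ofReal (dist (T x) (Tν i x) ^ 2) ∂ρ := by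
  classical
  set i0 : Fin d := ⟨0, by omega⟩ with hi0def
  set i1 : Fin d := ⟨1, by omega⟩ with hi1def
  have h01 : i0 ≠ i1 := by simp [hi0def, hi1def, Fin.ext_iff]
  -- restated hypotheses
  have hQ' : ∀ L R : ℝ, Q L R = {x : EuclideanSpace ℝ (Fin d) |
      0 < x i0 ∧ x i0 < L ∧ |x i1| < R / 2 ∧
      ∀ j : Fin d, 2 ≤ (j : ℕ) → |x j| < 1 / 2} := hQ
  have hT' : ∀ j, ∀ x ∈ S j, T x = if 0 ≤ x i1 then Bp j else Bm j := hT
  have hAp' : ∀ k, Ap k = EuclideanSpace.single i0 (u k + w k) := hAp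
  have hAm' : ∀ k, Am k = EuclideanSpace.single i0 (u k - w k) := hAm
  have hBp' : ∀ k, Bp k = EuclideanSpace.single i0 (u k) + EuclideanSpace.single i1 (w k) := hBp
  have hBm' : ∀ k, Bm k = EuclideanSpace.single i0 (u k) - EuclideanSpace.single i1 (w k) := hBm
  have hCp' : ∀ k, Cp k = EuclideanSpace.single i0 (u k + r k) +
      EuclideanSpace.single i1 (w k) := hCp
  have hCm' : ∀ k, Cm k = EuclideanSpace.single i0 (u k - r k) -
      EuclideanSpace.single i1 (w k) := hCm
  -- coordinates
  have hApc : ∀ k (j : Fin d), Ap k j = if j = i0 then u k + w k else 0 := by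
    intro k j; rw [hAp' k, EuclideanSpace.single_apply]
  have hAmc : ∀ k (j : Fin d), Am k j = if j = i0 then u k - w k else 0 := by
    intro k j; rw [hAm' k, EuclideanSpace.single_apply]
  have hBpc : ∀ k (j : Fin d), Bp k j =
      (if j = i0 then u k else 0) + (if j = i1 then w k else 0) := by
    intro k j
    rw [hBp' k]
    rw [show (EuclideanSpace.single i0 (u k) + EuclideanSpace.single i1 (w k)) j =
      EuclideanSpace.single i0 (u k) j + EuclideanSpace.single i1 (w k) j from rfl,
      EuclideanSpace.single_apply, EuclideanSpace.single_apply]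
  have hBmc : ∀ k (j : Fin d), Bm k j =
      (if j = i0 then u k else 0) - (if j = i1 then w k else 0) := by
    intro k j
    rw [hBm' k]
    rw [show (EuclideanSpace.single i0 (u k) - EuclideanSpace.single i1 (w k)) j =
      EuclideanSpace.single i0 (u k) j - EuclideanSpace.single i1 (w k) j from rfl,
      EuclideanSpace.single_apply, EuclideanSpace.single_apply]
  have hCpc : ∀ k (j : Fin d), Cp k j =
      (if j = i0 then u k + r k else 0) + (if j = i1 then w k else 0) := by
    intro k j
    rw [hCp' k]
    rw [show (EuclideanSpace.single i0 (u k + r k) + EuclideanSpace.single i1 (w k)) j =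
      EuclideanSpace.single i0 (u k + r k) j + EuclideanSpace.single i1 (w k) j from rfl,
      EuclideanSpace.single_apply, EuclideanSpace.single_apply]
  have hCmc : ∀ k (j : Fin d), Cm k j =
      (if j = i0 then u k - r k else 0) - (if j = i1 then w k else 0) := by
    intro k j
    rw [hCm' k]
    rw [show (EuclideanSpace.single i0 (u k - r k) - EuclideanSpace.single i1 (w k)) j =
      EuclideanSpace.single i0 (u k - r k) j - EuclideanSpace.single i1 (w k) j from rfl,
      EuclideanSpace.single_apply, EuclideanSpace.single_apply]
  -- distances
  have hdist1 : dist (Bp i) (Cp i) ^ 2 = r i ^ 2 := by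
    have h := dist_sq_eq (Bp i) (Cp i) i0 i1 h01 (-(r i)) ((0:ℝ))
      (by rw [hBpc, hCpc]; simp only [if_pos rfl, if_true, if_neg h01] <;> ring)
      (by rw [hBpc, hCpc]; simp only [if_pos rfl, if_true, if_neg (Ne.symm h01)] <;> ring)
      (fun j hj0 hj1 => by rw [hBpc, hCpc]; simp only [if_neg hj0, if_neg hj1] <;> ring)
    rw [h]; ring
  have hdist2 : dist (Bm i) (Cp i) ^ 2 = r i ^ 2 + 4 * w i ^ 2 := by
    have h := dist_sq_eq (Bm i) (Cp i) i0 i1 h01 (-(r i)) (-(2 * w i))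
      (by rw [hBmc, hCpc]; simp only [if_pos rfl, if_true, if_neg h01] <;> ring)
      (by rw [hBmc, hCpc]; simp only [if_pos rfl, if_true, if_neg (Ne.symm h01)] <;> ring)
      (fun j hj0 hj1 => by rw [hBmc, hCpc]; simp only [if_neg hj0, if_neg hj1] <;> ring)
    rw [h]; ring
  have hdist3 : dist (Bp i) (Cm i) ^ 2 = r i ^ 2 + 4 * w i ^ 2 := by
    have h := dist_sq_eq (Bp i) (Cm i) i0 i1 h01 (r i) (2 * w i)
      (by rw [hBpc, hCmc]; simp only [if_pos rfl, if_true, if_neg h01] <;> ring)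
      (by rw [hBpc, hCmc]; simp only [if_pos rfl, if_true, if_neg (Ne.symm h01)] <;> ring)
      (fun j hj0 hj1 => by rw [hBpc, hCmc]; simp only [if_neg hj0, if_neg hj1] <;> ring)
    rw [h]; ring
  have hdist4 : dist (Bm i) (Cm i) ^ 2 = r i ^ 2 := by
    have h := dist_sq_eq (Bm i) (Cm i) i0 i1 h01 (r i) ((0:ℝ))
      (by rw [hBmc, hCmc]; simp only [if_pos rfl, if_true, if_neg h01] <;> ring)
      (by rw [hBmc, hCmc]; simp only [if_pos rfl, if_true, if_neg (Ne.symm h01)] <;> ring)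
      (fun j hj0 hj1 => by rw [hBmc, hCmc]; simp only [if_neg hj0, if_neg hj1] <;> ring)
    rw [h]; ring
  -- box endpoint functions
  set pl : ℕ → Fin d → ℝ := fun k j =>
    if j = i0 then u k + w k else if j = i1 then -(r k / 2) else -(1/2) with hpldef
  set ph : ℕ → Fin d → ℝ := fun k j =>
    if j = i0 then u k + w k + ℓ k else if j = i1 then r k / 2 else 1/2 with hphdef
  set ml : ℕ → Fin d → ℝ := fun k j =>
    if j = i0 then u k - w k - ℓ k else if j = i1 then -(r k / 2) else -(1/2) with hmldef
  set mh : ℕ → Fin d → ℝ := fun k j =>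
    if j = i0 then u k - w k else if j = i1 then r k / 2 else 1/2 with hmhdef
  have hpl0 : ∀ k, pl k i0 = u k + w k := fun k => by rw [hpldef]; simp
  have hpl1 : ∀ k, pl k i1 = -(r k / 2) := fun k => by
    rw [hpldef]; simp only [if_neg (Ne.symm h01), if_pos rfl, if_true]
  have hpl2 : ∀ k j, j ≠ i0 → j ≠ i1 → pl k j = -(1/2) := fun k j h0 h1 => by
    rw [hpldef]; simp only [if_neg h0, if_neg h1]
  have hph0 : ∀ k, ph k i0 = u k + w k + ℓ k := fun k => by rw [hphdef]; simp
  have hph1 : ∀ k, ph k i1 = r k / 2 := fun k => by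
    rw [hphdef]; simp only [if_neg (Ne.symm h01), if_pos rfl, if_true]
  have hph2 : ∀ k j, j ≠ i0 → j ≠ i1 → ph k j = 1/2 := fun k j h0 h1 => by
    rw [hphdef]; simp only [if_neg h0, if_neg h1]
  have hml0 : ∀ k, ml k i0 = u k - w k - ℓ k := fun k => by rw [hmldef]; simp
  have hml1 : ∀ k, ml k i1 = -(r k / 2) := fun k => by
    rw [hmldef]; simp only [if_neg (Ne.symm h01), if_pos rfl, if_true]
  have hml2 : ∀ k j, j ≠ i0 → j ≠ i1 → ml k j = -(1/2) := fun k j h0 h1 => by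
    rw [hmldef]; simp only [if_neg h0, if_neg h1]
  have hmh0 : ∀ k, mh k i0 = u k - w k := fun k => by rw [hmhdef]; simp
  have hmh1 : ∀ k, mh k i1 = r k / 2 := fun k => by
    rw [hmhdef]; simp only [if_neg (Ne.symm h01), if_pos rfl, if_true]
  have hmh2 : ∀ k j, j ≠ i0 → j ≠ i1 → mh k j = 1/2 := fun k j h0 h1 => by
    rw [hmhdef]; simp only [if_neg h0, if_neg h1]
  -- boxes
  set SP : ℕ → Set (EuclideanSpace ℝ (Fin d)) :=
    fun k => {x | ∀ j, x j ∈ Set.Ioo (pl k j) (ph k j)} with hSPdef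
  set SM : ℕ → Set (EuclideanSpace ℝ (Fin d)) :=
    fun k => {x | ∀ j, x j ∈ Set.Ioo (ml k j) (mh k j)} with hSMdef
  have hmemSP : ∀ k x, x ∈ SP k ↔ ∀ j, x j ∈ Set.Ioo (pl k j) (ph k j) := fun k x => Iff.rfl
  have hmemSM : ∀ k x, x ∈ SM k ↔ ∀ j, x j ∈ Set.Ioo (ml k j) (mh k j) := fun k x => Iff.rfl
  -- helper: off indices
  have hne2 : ∀ j : Fin d, j ≠ i0 → j ≠ i1 → 2 ≤ (j : ℕ) := by
    intro j h0 h1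
    have e0 : (j : ℕ) ≠ 0 := fun he => h0 (by rw [hi0def]; exact Fin.ext he)
    have e1 : (j : ℕ) ≠ 1 := fun he => h1 (by rw [hi1def]; exact Fin.ext he)
    omega
  have hne2' : ∀ j : Fin d, 2 ≤ (j : ℕ) → j ≠ i0 := by
    intro j h2 he
    rw [he, hi0def] at h2; simp at h2
  have hne2'' : ∀ j : Fin d, 2 ≤ (j : ℕ) → j ≠ i1 := by
    intro j h2 he
    rw [he, hi1def] at h2; simp at h2
  -- image characterizations
  have hSPim : ∀ k, (fun q => Ap k + q) '' Q (ℓ k) (r k) = SP k := by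
    intro k
    ext x
    simp only [Set.mem_image]
    constructor
    · rintro ⟨q, hq, rfl⟩
      rw [hQ'] at hq
      obtain ⟨hq1, hq2, hq3, hq4⟩ := hq
      rw [hmemSP]
      intro j
      have hadd : (Ap k + q) j = Ap k j + q j := rfl
      by_cases hj0 : j = i0
      · subst hj0
        rw [hadd, hApc, if_pos rfl, hpl0, hph0]
        exact ⟨by linarith, by linarith⟩
      · by_cases hj1 : j = i1
        · subst hj1
          rw [hadd, hApc, if_neg (Ne.symm h01), hpl1, hph1]
          have h := abs_lt.mp hq3
          exact ⟨by linarith [h.1], by linarith [h.2]⟩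
        · rw [hadd, hApc, if_neg hj0, hpl2 k j hj0 hj1, hph2 k j hj0 hj1]
          have h := abs_lt.mp (hq4 j (hne2 j hj0 hj1))
          exact ⟨by linarith [h.1], by linarith [h.2]⟩
    · intro hx
      rw [hmemSP] at hx
      refine ⟨x - Ap k, ?_, by simp⟩
      rw [hQ']
      have hsub : ∀ j : Fin d, (x - Ap k) j = x j - Ap k j := fun j => rfl
      have h0 := hx i0; rw [hpl0, hph0] at h0
      have h1 := hx i1; rw [hpl1, hph1] at h1
      refine ⟨?_, ?_, ?_, ?_⟩
      · rw [hsub, hApc, if_pos rfl]; linarith [h0.1]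
      · rw [hsub, hApc, if_pos rfl]; linarith [h0.2]
      · rw [hsub, hApc, if_neg (Ne.symm h01), abs_lt]
        exact ⟨by linarith [h1.1], by linarith [h1.2]⟩
      · intro j h2j
        have hj0 := hne2' j h2j
        have hj1 := hne2'' j h2j
        have hj := hx j; rw [hpl2 k j hj0 hj1, hph2 k j hj0 hj1] at hj
        rw [hsub, hApc, if_neg hj0, abs_lt]
        exact ⟨by linarith [hj.1], by linarith [hj.2]⟩
  have hSMim : ∀ k, (fun q => Am k - q) '' Q (ℓ k) (r k) = SM k := by
    intro k
    ext x
    simp only [Set.mem_image]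
    constructor
    · rintro ⟨q, hq, rfl⟩
      rw [hQ'] at hq
      obtain ⟨hq1, hq2, hq3, hq4⟩ := hq
      rw [hmemSM]
      intro j
      have hsubc : (Am k - q) j = Am k j - q j := rfl
      by_cases hj0 : j = i0
      · subst hj0
        rw [hsubc, hAmc, if_pos rfl, hml0, hmh0]
        exact ⟨by linarith, by linarith⟩
      · by_cases hj1 : j = i1
        · subst hj1
          rw [hsubc, hAmc, if_neg (Ne.symm h01), hml1, hmh1]
          have h := abs_lt.mp hq3
          exact ⟨by linarith [h.2], by linarith [h.1]⟩
        · rw [hsubc, hAmc, if_neg hj0, hml2 k j hj0 hj1, hmh2 k j hj0 hj1]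
          have h := abs_lt.mp (hq4 j (hne2 j hj0 hj1))
          exact ⟨by linarith [h.2], by linarith [h.1]⟩
    · intro hx
      rw [hmemSM] at hx
      refine ⟨Am k - x, ?_, by simp⟩
      rw [hQ']
      have hsub : ∀ j : Fin d, (Am k - x) j = Am k j - x j := fun j => rfl
      have h0 := hx i0; rw [hml0, hmh0] at h0
      have h1 := hx i1; rw [hml1, hmh1] at h1
      refine ⟨?_, ?_, ?_, ?_⟩
      · rw [hsub, hAmc, if_pos rfl]; linarith [h0.2]
      · rw [hsub, hAmc, if_pos rfl]; linarith [h0.1]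
      · rw [hsub, hAmc, if_neg (Ne.symm h01), abs_lt]
        exact ⟨by linarith [h1.2], by linarith [h1.1]⟩
      · intro j h2j
        have hj0 := hne2' j h2j
        have hj1 := hne2'' j h2j
        have hj := hx j; rw [hml2 k j hj0 hj1, hmh2 k j hj0 hj1] at hj
        rw [hsub, hAmc, if_neg hj0, abs_lt]
        exact ⟨by linarith [hj.2], by linarith [hj.1]⟩
  -- measurability
  have hmSP : ∀ k, MeasurableSet (SP k) :=
    fun k => measurable_coordSet (fun j => Set.Ioo (pl k j) (ph k j)) (fun j => measurableSet_Ioo)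
  have hmSM : ∀ k, MeasurableSet (SM k) :=
    fun k => measurable_coordSet (fun j => Set.Ioo (ml k j) (mh k j)) (fun j => measurableSet_Ioo)
  have hSeq : ∀ k, S k = SP k ∪ SM k := fun k => by rw [hS k, hSPim k, hSMim k]
  have hmS : ∀ k, MeasurableSet (S k) := fun k => by
    rw [hSeq k]; exact (hmSP k).union (hmSM k)
  have hmX : MeasurableSet X := by rw [hX]; exact MeasurableSet.iUnion hmS
  -- slab bounds
  have hslab : ∀ k x, x ∈ S k → u k - (ℓ k + w k) ≤ x i0 ∧ x i0 ≤ u k + (ℓ k + w k) := by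
    intro k x hx
    rw [hSeq k] at hx
    rcases hx with hx | hx
    · have h := (hmemSP k x).mp hx i0
      rw [hpl0, hph0] at h
      exact ⟨by linarith [h.1, hℓ k, hw k], by linarith [h.2]⟩
    · have h := (hmemSM k x).mp hx i0
      rw [hml0, hmh0] at h
      exact ⟨by linarith [h.1], by linarith [h.2, hℓ k, hw k]⟩
  -- monotonicity and gaps
  have humono : Monotone u := by
    apply monotone_nat_of_le_succ
    intro k
    have h := hsep k
    have h1 := le_max_left (ℓ k) (max (r k) (w k))
    have h2 := hℓ k
    linarith
  have hgaps : ∀ k, ℓ k + w k ≤ u (k + 1) - u k := by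
    intro k
    have h := hsep k
    have h1 := le_max_left (ℓ k) (max (r k) (w k))
    have h2 : w k ≤ max (ℓ k) (max (r k) (w k)) :=
      le_trans (le_max_right (r k) (w k)) (le_max_right _ _)
    have h3 := hℓ k
    linarith
  have hgaps' : ∀ k, ℓ (k + 1) + w (k + 1) ≤ u (k + 1) - u k := by
    intro k
    have h := hsep' k
    have h1 := le_max_left (ℓ (k + 1)) (max (r (k + 1)) (w (k + 1)))
    have h2 : w (k + 1) ≤ max (ℓ (k + 1)) (max (r (k + 1)) (w (k + 1))) :=
      le_trans (le_max_right _ _) (le_max_right _ _)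
    have h3 := hℓ (k + 1)
    linarith
  -- lower bound for accumulation points
  have hmainlb : ∀ y, y ∈ closure X → (∀ j, y ∉ closure (S j)) → ∀ k, u k ≤ y i0 := by
    intro y hy hnc k
    have hCclosed : IsClosed (⋃ j ∈ Finset.range (k + 1), closure (S j)) :=
      Set.Finite.isClosed_biUnion (Finset.range (k + 1)).finite_toSet
        (fun j _ => isClosed_closure)
    have hyC : y ∈ (⋃ j ∈ Finset.range (k + 1), closure (S j))ᶜ := by
      intro h
      obtain ⟨j, _, hj⟩ := Set.mem_iUnion₂.mp h
      exact hnc j hj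
    obtain ⟨ε₀, hε₀, hball⟩ := Metric.isOpen_iff.mp hCclosed.isOpen_compl y hyC
    apply le_of_forall_pos_le_add
    intro ε hε
    obtain ⟨x, hxX, hdxy⟩ := Metric.mem_closure_iff.mp hy (min ε ε₀) (lt_min hε hε₀)
    obtain ⟨j, hxS⟩ : ∃ j, x ∈ S j := by
      rw [hX] at hxX; exact Set.mem_iUnion.mp hxX
    have hjk : k < j := by
      by_contra hle
      push_neg at hle
      have hxmem : x ∈ ⋃ j' ∈ Finset.range (k + 1), closure (S j') :=
        Set.mem_iUnion₂.2 ⟨j, Finset.mem_range.mpr (by omega), subset_closure hxS⟩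
      have hxball : x ∈ Metric.ball y ε₀ := by
        rw [Metric.mem_ball, dist_comm]
        exact lt_of_lt_of_le hdxy (min_le_right _ _)
      exact hball hxball hxmem
    obtain ⟨m, rfl⟩ : ∃ m, j = m + 1 := ⟨j - 1, by omega⟩
    have h1 := (hslab (m + 1) x hxS).1
    have h2 := hgaps' m
    have h3 : u k ≤ u m := humono (by omega)
    have h4 := coord_dist_le y x i0
    have h5 : dist y x < ε := lt_of_lt_of_le hdxy (min_le_left _ _)
    have h6 := (abs_lt.mp (lt_of_le_of_lt h4 h5)).1
    linarith
  -- closure X \ X is null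
  have hclosnull : volume (closure X \ X) = 0 := by
    have hsub : closure X \ X ⊆
        (⋃ j, (closure (S j) \ S j)) ∪ (closure X \ ⋃ j, closure (S j)) := by
      rintro y ⟨hy1, hy2⟩
      by_cases h : ∃ j, y ∈ closure (S j)
      · obtain ⟨j, hj⟩ := h
        left
        refine Set.mem_iUnion.2 ⟨j, hj, fun hyS => hy2 ?_⟩
        rw [hX]; exact Set.mem_iUnion.2 ⟨j, hyS⟩
      · right
        push_neg at h
        exact ⟨hy1, fun hc => by obtain ⟨j, hj⟩ := Set.mem_iUnion.mp hc; exact h j hj⟩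
    apply measure_mono_null hsub
    apply measure_union_null
    · apply measure_iUnion_null
      intro j
      have hsplit : closure (S j) \ S j ⊆
          (closure (SP j) \ SP j) ∪ (closure (SM j) \ SM j) := by
        rw [hSeq j, closure_union]
        rintro y ⟨hy1, hy2⟩
        rcases hy1 with h | h
        · exact Or.inl ⟨h, fun hh => hy2 (Or.inl hh)⟩
        · exact Or.inr ⟨h, fun hh => hy2 (Or.inr hh)⟩
      apply measure_mono_null hsplit
      exact measure_union_null (box_closure_diff_null (pl j) (ph j))
        (box_closure_diff_null (ml j) (mh j))
    · by_cases hB : BddAbove (Set.range u)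
      · apply measure_mono_null ?_ (vol_hyperplane i0 (sSup (Set.range u)))
        rintro y ⟨hy1, hy2⟩
        have hnc : ∀ j, y ∉ closure (S j) := fun j hj => hy2 (Set.mem_iUnion.2 ⟨j, hj⟩)
        have hlb := hmainlb y hy1 hnc
        have hge : sSup (Set.range u) ≤ y i0 :=
          csSup_le (Set.range_nonempty u) (by rintro _ ⟨k, rfl⟩; exact hlb k)
        have hle : y i0 ≤ sSup (Set.range u) := by
          have hXsub : X ⊆ {x : EuclideanSpace ℝ (Fin d) | x i0 ≤ sSup (Set.range u)} := by
            intro x hx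
            rw [hX] at hx
            obtain ⟨j, hxS⟩ := Set.mem_iUnion.mp hx
            have h1 := (hslab j x hxS).2
            have h2 := hgaps j
            have h3 : u (j + 1) ≤ sSup (Set.range u) := le_csSup hB (Set.mem_range_self _)
            simp only [Set.mem_setOf_eq]
            linarith
          have hcont : Continuous (fun x : EuclideanSpace ℝ (Fin d) => x i0) :=
            (continuous_apply i0).comp (PiLp.continuous_ofLp 2 _)
          have hcl : IsClosed {x : EuclideanSpace ℝ (Fin d) | x i0 ≤ sSup (Set.range u)} :=
            isClosed_le hcont continuous_const
          exact closure_minimal hXsub hcl hy1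
        exact le_antisymm hle hge
      · have hempty : closure X \ ⋃ j, closure (S j) = ∅ := by
          ext y
          simp only [Set.mem_empty_iff_false, iff_false]
          rintro ⟨hy1, hy2⟩
          apply hB
          refine ⟨y i0, ?_⟩
          rintro _ ⟨k, rfl⟩
          exact hmainlb y hy1 (fun j hj => hy2 (Set.mem_iUnion.2 ⟨j, hj⟩)) k
        rw [hempty]
        exact measure_empty
  -- rho of complement of X is null
  have hρXc : ρ Xᶜ = 0 := by
    have h1 : ρ (closure X \ X) = 0 := by
      rw [hρ]; exact withDensity_absolutelyContinuous volume g hclosnull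
    have h2 : ρ ((closure X)ᶜ) = 0 := by
      rw [hρ, withDensity_apply _ isClosed_closure.measurableSet.compl]
      rw [setLIntegral_congr_fun_ae isClosed_closure.measurableSet.compl
        (ae_of_all _ (fun x hx => hgsupp x hx))]
      simp
    have hsub : Xᶜ ⊆ (closure X \ X) ∪ (closure X)ᶜ := by
      intro x hx
      by_cases h : x ∈ closure X
      · exact Or.inl ⟨h, hx⟩
      · exact Or.inr h
    exact measure_mono_null hsub (measure_union_null h1 h2)
  -- quarter sets
  set SPP : Set (EuclideanSpace ℝ (Fin d)) :=
    {x | ∀ j, x j ∈ (if j = i1 then Set.Ico 0 (ph i i1) else Set.Ioo (pl i j) (ph i j))}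
    with hSPPdef
  set SPM : Set (EuclideanSpace ℝ (Fin d)) :=
    {x | ∀ j, x j ∈ (if j = i1 then Set.Ioo (pl i i1) 0 else Set.Ioo (pl i j) (ph i j))}
    with hSPMdef
  set SMP : Set (EuclideanSpace ℝ (Fin d)) :=
    {x | ∀ j, x j ∈ (if j = i1 then Set.Ico 0 (mh i i1) else Set.Ioo (ml i j) (mh i j))}
    with hSMPdef
  set SMM : Set (EuclideanSpace ℝ (Fin d)) :=
    {x | ∀ j, x j ∈ (if j = i1 then Set.Ioo (ml i i1) 0 else Set.Ioo (ml i j) (mh i j))}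
    with hSMMdef
  have hplneg : pl i i1 < 0 := by rw [hpl1]; linarith [hr i]
  have hphpos : (0:ℝ) < ph i i1 := by rw [hph1]; linarith [hr i]
  have hmlneg : ml i i1 < 0 := by rw [hml1]; linarith [hr i]
  have hmhpos : (0:ℝ) < mh i i1 := by rw [hmh1]; linarith [hr i]
  have hSPPiff : ∀ x, x ∈ SPP ↔ x ∈ SP i ∧ 0 ≤ x i1 :=
    fun x => (quarter_pos i1 (pl i) (ph i) hplneg x).symm
  have hSPMiff : ∀ x, x ∈ SPM ↔ x ∈ SP i ∧ x i1 < 0 :=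
    fun x => (quarter_neg i1 (pl i) (ph i) hphpos x).symm
  have hSMPiff : ∀ x, x ∈ SMP ↔ x ∈ SM i ∧ 0 ≤ x i1 :=
    fun x => (quarter_pos i1 (ml i) (mh i) hmlneg x).symm
  have hSMMiff : ∀ x, x ∈ SMM ↔ x ∈ SM i ∧ x i1 < 0 :=
    fun x => (quarter_neg i1 (ml i) (mh i) hmhpos x).symm
  have hmSPP : MeasurableSet SPP :=
    measurable_coordSet _ (fun j => by
      by_cases hj : j = i1
      · rw [if_pos hj]; exact measurableSet_Ico
      · rw [if_neg hj]; exact measurableSet_Ioo)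
  have hmSPM : MeasurableSet SPM :=
    measurable_coordSet _ (fun j => by
      by_cases hj : j = i1
      · rw [if_pos hj]; exact measurableSet_Ioo
      · rw [if_neg hj]; exact measurableSet_Ioo)
  have hmSMP : MeasurableSet SMP :=
    measurable_coordSet _ (fun j => by
      by_cases hj : j = i1
      · rw [if_pos hj]; exact measurableSet_Ico
      · rw [if_neg hj]; exact measurableSet_Ioo)
  have hmSMM : MeasurableSet SMM :=
    measurable_coordSet _ (fun j => by
      by_cases hj : j = i1
      · rw [if_pos hj]; exact measurableSet_Ioo
      · rw [if_neg hj]; exact measurableSet_Ioo)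
  -- volumes
  have hvolSP : volume (SP i) = ENNReal.ofReal (ℓ i) * ENNReal.ofReal (r i) := by
    have h := vol_coordSet (fun j => Set.Ioo (pl i j) (ph i j)) (fun j => measurableSet_Ioo)
    refine h.trans ?_
    have hc : ∀ j : Fin d, j ∈ Finset.univ → volume (Set.Ioo (pl i j) (ph i j)) =
        (if j = i0 then ENNReal.ofReal (ℓ i) else if j = i1 then ENNReal.ofReal (r i) else 1) := by
      intro j _
      by_cases hj0 : j = i0
      · subst hj0
        rw [if_pos rfl, hpl0, hph0, Real.volume_Ioo]
        congr 1; ring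
      · by_cases hj1 : j = i1
        · subst hj1
          rw [if_neg hj0, if_pos rfl, hpl1, hph1, Real.volume_Ioo]
          congr 1; ring
        · rw [if_neg hj0, if_neg hj1, hpl2 i j hj0 hj1, hph2 i j hj0 hj1, Real.volume_Ioo]
          norm_num
    rw [Finset.prod_congr rfl hc]
    exact prod_ite2 i0 i1 h01 _ _
  have hvolSPP : volume SPP = ENNReal.ofReal (ℓ i) * ENNReal.ofReal (r i / 2) := by
    have h := vol_coordSet
      (fun j => if j = i1 then Set.Ico 0 (ph i i1) else Set.Ioo (pl i j) (ph i j))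
      (fun j => by
        beta_reduce
        by_cases hj : j = i1
        · rw [if_pos hj]; exact measurableSet_Ico
        · rw [if_neg hj]; exact measurableSet_Ioo)
    refine h.trans ?_
    have hc : ∀ j : Fin d, j ∈ Finset.univ →
        volume (if j = i1 then Set.Ico 0 (ph i i1) else Set.Ioo (pl i j) (ph i j)) =
        (if j = i0 then ENNReal.ofReal (ℓ i) else if j = i1 then ENNReal.ofReal (r i / 2) else 1) := by
      intro j _
      by_cases hj1 : j = i1
      · subst hj1
        rw [if_pos rfl, if_neg (Ne.symm h01), if_pos rfl, hph1, Real.volume_Ico]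
        congr 1; ring
      · rw [if_neg hj1]
        by_cases hj0 : j = i0
        · subst hj0
          rw [if_pos rfl, hpl0, hph0, Real.volume_Ioo]
          congr 1; ring
        · rw [if_neg hj0, if_neg hj1, hpl2 i j hj0 hj1, hph2 i j hj0 hj1, Real.volume_Ioo]
          norm_num
    rw [Finset.prod_congr rfl hc]
    exact prod_ite2 i0 i1 h01 _ _
  have hvolSPM : volume SPM = ENNReal.ofReal (ℓ i) * ENNReal.ofReal (r i / 2) := by
    have h := vol_coordSet
      (fun j => if j = i1 then Set.Ioo (pl i i1) 0 else Set.Ioo (pl i j) (ph i j))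
      (fun j => by
        beta_reduce
        by_cases hj : j = i1
        · rw [if_pos hj]; exact measurableSet_Ioo
        · rw [if_neg hj]; exact measurableSet_Ioo)
    refine h.trans ?_
    have hc : ∀ j : Fin d, j ∈ Finset.univ →
        volume (if j = i1 then Set.Ioo (pl i i1) 0 else Set.Ioo (pl i j) (ph i j)) =
        (if j = i0 then ENNReal.ofReal (ℓ i) else if j = i1 then ENNReal.ofReal (r i / 2) else 1) := by
      intro j _
      by_cases hj1 : j = i1
      · subst hj1
        rw [if_pos rfl, if_neg (Ne.symm h01), if_pos rfl, hpl1, Real.volume_Ioo]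
        congr 1; ring
      · rw [if_neg hj1]
        by_cases hj0 : j = i0
        · subst hj0
          rw [if_pos rfl, hpl0, hph0, Real.volume_Ioo]
          congr 1; ring
        · rw [if_neg hj0, if_neg hj1, hpl2 i j hj0 hj1, hph2 i j hj0 hj1, Real.volume_Ioo]
          norm_num
    rw [Finset.prod_congr rfl hc]
    exact prod_ite2 i0 i1 h01 _ _
  have hvolSMP : volume SMP = ENNReal.ofReal (ℓ i) * ENNReal.ofReal (r i / 2) := by
    have h := vol_coordSet
      (fun j => if j = i1 then Set.Ico 0 (mh i i1) else Set.Ioo (ml i j) (mh i j))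
      (fun j => by
        beta_reduce
        by_cases hj : j = i1
        · rw [if_pos hj]; exact measurableSet_Ico
        · rw [if_neg hj]; exact measurableSet_Ioo)
    refine h.trans ?_
    have hc : ∀ j : Fin d, j ∈ Finset.univ →
        volume (if j = i1 then Set.Ico 0 (mh i i1) else Set.Ioo (ml i j) (mh i j)) =
        (if j = i0 then ENNReal.ofReal (ℓ i) else if j = i1 then ENNReal.ofReal (r i / 2) else 1) := by
      intro j _
      by_cases hj1 : j = i1
      · subst hj1
        rw [if_pos rfl, if_neg (Ne.symm h01), if_pos rfl, hmh1, Real.volume_Ico]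
        congr 1; ring
      · rw [if_neg hj1]
        by_cases hj0 : j = i0
        · subst hj0
          rw [if_pos rfl, hml0, hmh0, Real.volume_Ioo]
          congr 1; ring
        · rw [if_neg hj0, if_neg hj1, hml2 i j hj0 hj1, hmh2 i j hj0 hj1, Real.volume_Ioo]
          norm_num
    rw [Finset.prod_congr rfl hc]
    exact prod_ite2 i0 i1 h01 _ _
  have hvolSMM : volume SMM = ENNReal.ofReal (ℓ i) * ENNReal.ofReal (r i / 2) := by
    have h := vol_coordSet
      (fun j => if j = i1 then Set.Ioo (ml i i1) 0 else Set.Ioo (ml i j) (mh i j))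
      (fun j => by
        beta_reduce
        by_cases hj : j = i1
        · rw [if_pos hj]; exact measurableSet_Ioo
        · rw [if_neg hj]; exact measurableSet_Ioo)
    refine h.trans ?_
    have hc : ∀ j : Fin d, j ∈ Finset.univ →
        volume (if j = i1 then Set.Ioo (ml i i1) 0 else Set.Ioo (ml i j) (mh i j)) =
        (if j = i0 then ENNReal.ofReal (ℓ i) else if j = i1 then ENNReal.ofReal (r i / 2) else 1) := by
      intro j _
      by_cases hj1 : j = i1
      · subst hj1
        rw [if_pos rfl, if_neg (Ne.symm h01), if_pos rfl, hml1, Real.volume_Ioo]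
        congr 1; ring
      · rw [if_neg hj1]
        by_cases hj0 : j = i0
        · subst hj0
          rw [if_pos rfl, hml0, hmh0, Real.volume_Ioo]
          congr 1; ring
        · rw [if_neg hj0, if_neg hj1, hml2 i j hj0 hj1, hmh2 i j hj0 hj1, Real.volume_Ioo]
          norm_num
    rw [Finset.prod_congr rfl hc]
    exact prod_ite2 i0 i1 h01 _ _
  -- subsets
  have hSPsubS : SP i ⊆ S i := by rw [hSeq i]; exact Set.subset_union_left
  have hSMsubS : SM i ⊆ S i := by rw [hSeq i]; exact Set.subset_union_right
  have hdisjPM : ∀ x, x ∈ SP i → x ∈ SM i → False := by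
    intro x hxp hxm
    have h1 := (hmemSP i x).mp hxp i0
    rw [hpl0, hph0] at h1
    have h2 := (hmemSM i x).mp hxm i0
    rw [hml0, hmh0] at h2
    linarith [h1.1, h2.2, hw i]
  obtain ⟨c, hc⟩ := hgconst i
  -- the model function F
  set F : EuclideanSpace ℝ (Fin d) → ℝ≥0∞ := fun x =>
    SPP.indicator (fun _ => ENNReal.ofReal (r i ^ 2)) x +
    SPM.indicator (fun _ => ENNReal.ofReal (r i ^ 2 + 4 * w i ^ 2)) x +
    SMP.indicator (fun _ => ENNReal.ofReal (r i ^ 2 + 4 * w i ^ 2)) x +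
    SMM.indicator (fun _ => ENNReal.ofReal (r i ^ 2)) x with hFdef
  have hFmeas : Measurable F :=
    (((measurable_const.indicator hmSPP).add (measurable_const.indicator hmSPM)).add
      (measurable_const.indicator hmSMP)).add (measurable_const.indicator hmSMM)
  -- pointwise identification on X
  have hptwise : ∀ x ∈ X, ENNReal.ofReal (dist (T x) (Tν i x) ^ 2) = F x := by
    intro x hxX
    by_cases hxp : x ∈ SP i
    · have hxS : x ∈ S i := hSPsubS hxp
      have hxm : x ∉ SM i := fun h => hdisjPM x hxp h
      have hTνx : Tν i x = Cp i := hTν₂ i x (by rw [hSPim i]; exact hxp)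
      have hTx := hT' i x hxS
      by_cases hx1 : 0 ≤ x i1
      · rw [hTx, if_pos hx1, hTνx]
        have hin : x ∈ SPP := (hSPPiff x).mpr ⟨hxp, hx1⟩
        have hn2 : x ∉ SPM := fun h => absurd ((hSPMiff x).mp h).2 (not_lt.mpr hx1)
        have hn3 : x ∉ SMP := fun h => hxm ((hSMPiff x).mp h).1
        have hn4 : x ∉ SMM := fun h => hxm ((hSMMiff x).mp h).1
        rw [hFdef]
        simp only [Set.indicator_of_mem hin, Set.indicator_of_notMem hn2,
          Set.indicator_of_notMem hn3, Set.indicator_of_notMem hn4, hdist1]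
        simp
      · push_neg at hx1
        rw [hTx, if_neg (not_le.mpr hx1), hTνx]
        have hin : x ∈ SPM := (hSPMiff x).mpr ⟨hxp, hx1⟩
        have hn1 : x ∉ SPP := fun h => absurd ((hSPPiff x).mp h).2 (not_le.mpr hx1)
        have hn3 : x ∉ SMP := fun h => hxm ((hSMPiff x).mp h).1
        have hn4 : x ∉ SMM := fun h => hxm ((hSMMiff x).mp h).1
        rw [hFdef]
        simp only [Set.indicator_of_mem hin, Set.indicator_of_notMem hn1,
          Set.indicator_of_notMem hn3, Set.indicator_of_notMem hn4, hdist2]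
        simp
    · by_cases hxm : x ∈ SM i
      · have hxS : x ∈ S i := hSMsubS hxm
        have hTνx : Tν i x = Cm i := hTν₃ i x (by rw [hSMim i]; exact hxm)
        have hTx := hT' i x hxS
        by_cases hx1 : 0 ≤ x i1
        · rw [hTx, if_pos hx1, hTνx]
          have hin : x ∈ SMP := (hSMPiff x).mpr ⟨hxm, hx1⟩
          have hn1 : x ∉ SPP := fun h => hxp ((hSPPiff x).mp h).1
          have hn2 : x ∉ SPM := fun h => hxp ((hSPMiff x).mp h).1
          have hn4 : x ∉ SMM := fun h => absurd ((hSMMiff x).mp h).2 (not_lt.mpr hx1)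
          rw [hFdef]
          simp only [Set.indicator_of_mem hin, Set.indicator_of_notMem hn1,
            Set.indicator_of_notMem hn2, Set.indicator_of_notMem hn4, hdist3]
          simp
        · push_neg at hx1
          rw [hTx, if_neg (not_le.mpr hx1), hTνx]
          have hin : x ∈ SMM := (hSMMiff x).mpr ⟨hxm, hx1⟩
          have hn1 : x ∉ SPP := fun h => hxp ((hSPPiff x).mp h).1
          have hn2 : x ∉ SPM := fun h => hxp ((hSPMiff x).mp h).1
          have hn3 : x ∉ SMP := fun h => absurd ((hSMPiff x).mp h).2 (not_le.mpr hx1)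
          rw [hFdef]
          simp only [Set.indicator_of_mem hin, Set.indicator_of_notMem hn1,
            Set.indicator_of_notMem hn2, Set.indicator_of_notMem hn3, hdist4]
          simp
      · -- x outside S i
        have hxS : x ∉ S i := by
          rw [hSeq i]
          rintro (h | h)
          exacts [hxp h, hxm h]
        have hTνx : Tν i x = T x := hTν₁ i x ⟨hxX, hxS⟩
        have hn1 : x ∉ SPP := fun h => hxp ((hSPPiff x).mp h).1
        have hn2 : x ∉ SPM := fun h => hxp ((hSPMiff x).mp h).1
        have hn3 : x ∉ SMP := fun h => hxm ((hSMPiff x).mp h).1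
        have hn4 : x ∉ SMM := fun h => hxm ((hSMMiff x).mp h).1
        rw [hTνx, hFdef]
        simp only [Set.indicator_of_notMem hn1, Set.indicator_of_notMem hn2,
          Set.indicator_of_notMem hn3, Set.indicator_of_notMem hn4, dist_self]
        simp
  -- a.e. equality
  have hae : (fun x => ENNReal.ofReal (dist (T x) (Tν i x) ^ 2)) =ᵐ[ρ] F := by
    rw [Filter.EventuallyEq, ae_iff]
    have hsub : {x | ¬ ENNReal.ofReal (dist (T x) (Tν i x) ^ 2) = F x} ⊆ Xᶜ :=
      fun x hx hxX => hx (hptwise x hxX)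
    exact measure_mono_null hsub hρXc
  -- sigma
  have hσi : σ i = c * (ENNReal.ofReal (ℓ i) * ENNReal.ofReal (r i)) := by
    rw [hσ i, hSPim i, hρ, withDensity_apply _ (hmSP i)]
    rw [setLIntegral_congr_fun_ae (hmSP i) (ae_of_all _ (fun x hx => hc x (hSPsubS hx)))]
    rw [setLIntegral_const, hvolSP]
  -- integral of F
  have hintF : ∫⁻ x, F x =
      ENNReal.ofReal (r i ^ 2) * (ENNReal.ofReal (ℓ i) * ENNReal.ofReal (r i / 2)) +
      ENNReal.ofReal (r i ^ 2 + 4 * w i ^ 2) * (ENNReal.ofReal (ℓ i) * ENNReal.ofReal (r i / 2)) +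
      ENNReal.ofReal (r i ^ 2 + 4 * w i ^ 2) * (ENNReal.ofReal (ℓ i) * ENNReal.ofReal (r i / 2)) +
      ENNReal.ofReal (r i ^ 2) * (ENNReal.ofReal (ℓ i) * ENNReal.ofReal (r i / 2)) := by
    rw [hFdef]; beta_reduce
    rw [lintegral_add_left (f := fun x => SPP.indicator (fun _ => ENNReal.ofReal (r i ^ 2)) x + SPM.indicator (fun _ => ENNReal.ofReal (r i ^ 2 + 4 * w i ^ 2)) x + SMP.indicator (fun _ => ENNReal.ofReal (r i ^ 2 + 4 * w i ^ 2)) x) (((measurable_const.indicator hmSPP).add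
      (measurable_const.indicator hmSPM)).add (measurable_const.indicator hmSMP))]
    rw [lintegral_add_left (f := fun x => SPP.indicator (fun _ => ENNReal.ofReal (r i ^ 2)) x + SPM.indicator (fun _ => ENNReal.ofReal (r i ^ 2 + 4 * w i ^ 2)) x) ((measurable_const.indicator hmSPP).add
      (measurable_const.indicator hmSPM))]
    rw [lintegral_add_left (measurable_const.indicator hmSPP)]
    rw [lintegral_indicator_const hmSPP, lintegral_indicator_const hmSPM,
      lintegral_indicator_const hmSMP, lintegral_indicator_const hmSMM,
      hvolSPP, hvolSPM, hvolSMP, hvolSMM]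
  -- main equality
  have hmain : ∫⁻ x, ENNReal.ofReal (dist (T x) (Tν i x) ^ 2) ∂ρ =
      σ i * ENNReal.ofReal (2 * r i ^ 2 + 4 * w i ^ 2) := by
    rw [lintegral_congr_ae hae, hρ, lintegral_withDensity_eq_lintegral_mul volume hgmeas hFmeas]
    have hgF : ∀ x, (g * F) x = c * F x := by
      intro x
      rw [Pi.mul_apply]
      by_cases hxS : x ∈ S i
      · rw [hc x hxS]
      · have hn1 : x ∉ SPP := fun h => hxS (hSPsubS ((hSPPiff x).mp h).1)
        have hn2 : x ∉ SPM := fun h => hxS (hSPsubS ((hSPMiff x).mp h).1)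
        have hn3 : x ∉ SMP := fun h => hxS (hSMsubS ((hSMPiff x).mp h).1)
        have hn4 : x ∉ SMM := fun h => hxS (hSMsubS ((hSMMiff x).mp h).1)
        have hF0 : F x = 0 := by
          rw [hFdef]
          simp only [Set.indicator_of_notMem hn1, Set.indicator_of_notMem hn2,
            Set.indicator_of_notMem hn3, Set.indicator_of_notMem hn4]
          simp
        rw [hF0, mul_zero, mul_zero]
    rw [lintegral_congr hgF, lintegral_const_mul c hFmeas, hintF, hσi]
    rw [mul_assoc]
    congr 1
    have hrpos : (0:ℝ) ≤ r i := le_of_lt (hr i)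
    have hlpos : (0:ℝ) ≤ ℓ i := le_of_lt (hℓ i)
    have e1 : ENNReal.ofReal (ℓ i) * ENNReal.ofReal (r i / 2) =
        ENNReal.ofReal (ℓ i * (r i / 2)) := (ENNReal.ofReal_mul hlpos).symm
    have e2 : ENNReal.ofReal (ℓ i) * ENNReal.ofReal (r i) =
        ENNReal.ofReal (ℓ i * r i) := (ENNReal.ofReal_mul hlpos).symm
    rw [e1, e2,
      ← ENNReal.ofReal_mul (by positivity : (0:ℝ) ≤ r i ^ 2),
      ← ENNReal.ofReal_mul (by positivity : (0:ℝ) ≤ r i ^ 2 + 4 * w i ^ 2),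
      ← ENNReal.ofReal_mul (by positivity : (0:ℝ) ≤ ℓ i * r i),
      ← ENNReal.ofReal_add (by positivity) (by positivity),
      ← ENNReal.ofReal_add (by positivity) (by positivity),
      ← ENNReal.ofReal_add (by positivity) (by positivity)]
    exact congrArg ENNReal.ofReal (by ring)
  refine ⟨hmain, ?_⟩
  rw [hmain]
  exact mul_le_mul_right (ENNReal.ofReal_le_ofReal (by nlinarith [sq_nonneg (r i)])) _
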